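/- arXiv:1904.07500 — 3 statements merged into one kernel-verified Lean document; each statement's English description precedes it below -/
import Mathlib

section
/- Under assumption (H) and the step-size restriction, the deterministic theta EM approximation Z_{h_l} of the delay ODE (the scheme with ε = 0) satisfies: for every p ≥ 2 there exists a constant C, independent of M and l, such that |Z_{h_l}(t)|^p ≤ C for all fine grid points t ∈ [0, T], and sup_{0 ≤ n < M^{l−1}, 1 ≤ k ≤ M} |Z_{h_l}(t_n^k) − Z_{h_l}(t_n)|^p ≤ C M^p h_l^p. -/
open MeasureTheory

noncomputable section

set_option maxHeartbeats 2000000 in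
/-- Under the (global Lipschitz) assumption (H) and the step-size
restriction, the deterministic theta EM approximation `Z_{h_l}` of the delay ODE (the scheme
with `ε = 0`) satisfies, for every `p ≥ 2` and a constant `C` independent of `M` and `l`:
`|Z_{h_l}(t)|^p ≤ C` on all fine grid points `t ∈ [0, T]`, and
`|Z_{h_l}(t_n^k) − Z_{h_l}(t_n)|^p ≤ C M^p h_l^p` for `0 ≤ n < M^{l−1}`, `1 ≤ k ≤ M`. -/
theorem stmt2
    (a : ℕ) (ha : 1 ≤ a)
    (f : EuclideanSpace ℝ (Fin a) → EuclideanSpace ℝ (Fin a) → EuclideanSpace ℝ (Fin a))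
    (α : ℝ) (hα : 1 < α)
    -- global Lipschitz part of (H)
    (hLip : ∀ x y x' y' : EuclideanSpace ℝ (Fin a),
      ‖f x y - f x' y'‖ ≤ α * (‖x - x'‖ + ‖y - y'‖))
    (θ : ℝ) (hθ : θ ∈ Set.Icc (0:ℝ) 1)
    (τ T : ℝ) (hτ : 0 < τ) (hT : 0 < T)
    (ξ : ℝ → EuclideanSpace ℝ (Fin a)) (hξ : Continuous ξ)
    (p : ℝ) (hp : 2 ≤ p) :
    -- C is independent of M and l
    ∃ C : ℝ, ∀ (M l ml : ℕ), 2 ≤ M → 1 ≤ l → 0 < ml →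
      ∀ hl : ℝ, hl = T / (M:ℝ) ^ l →
      τ = ml * hl →
      -- step-size restriction (h_{l-1} = T / M^(l-1) = M * h_l)
      (0 < θ → θ * ((M:ℝ) * hl) < 1 / max (1/2 + α ^ 2) (6 * max α ‖f 0 0‖)) →
      ∀ Z : ℤ → EuclideanSpace ℝ (Fin a),
        -- initial data on the fine grid points of [−τ, 0]
        (∀ j : ℤ, -(ml:ℤ) ≤ j → j ≤ 0 → Z j = ξ (j * hl)) →
        -- deterministic theta EM recursion on the fine grid
        (∀ j : ℤ, 0 ≤ j → j < (M ^ l : ℕ) →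
          Z (j+1) = Z j + (θ * hl) • f (Z (j+1)) (Z (j+1-(ml:ℤ)))
            + ((1-θ) * hl) • f (Z j) (Z (j-(ml:ℤ)))) →
        (∀ j : ℤ, 0 ≤ j → j ≤ (M ^ l : ℕ) → ‖Z j‖ ^ p ≤ C) ∧
        (∀ n k : ℕ, n < M ^ (l-1) → 1 ≤ k → k ≤ M →
          ‖Z ((n:ℤ) * M + k) - Z ((n:ℤ) * M)‖ ^ p ≤ C * (M:ℝ) ^ p * hl ^ p) := by
  obtain ⟨hθ0, hθ1⟩ := hθ
  -- bound on initial data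
  obtain ⟨B, hB⟩ := (isCompact_Icc (a := -τ) (b := 0)).exists_bound_of_continuousOn
    hξ.continuousOn
  have hB0 : 0 ≤ B := le_trans (norm_nonneg _) (hB 0 ⟨by linarith, le_refl 0⟩)
  set β : ℝ := max α ‖f 0 0‖ with hβdef
  have hβ1 : 1 ≤ β := le_trans hα.le (le_max_left _ _)
  have hβ0 : 0 < β := lt_of_lt_of_le one_pos hβ1
  -- linear growth bound for f
  have hf : ∀ x y : EuclideanSpace ℝ (Fin a), ‖f x y‖ ≤ β * (1 + ‖x‖ + ‖y‖) := by
    intro x y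
    have h1 := hLip x y 0 0
    simp only [sub_zero] at h1
    have h2 : ‖f x y‖ ≤ ‖f x y - f 0 0‖ + ‖f 0 0‖ := by
      calc ‖f x y‖ = ‖(f x y - f 0 0) + f 0 0‖ := by rw [sub_add_cancel]
        _ ≤ ‖f x y - f 0 0‖ + ‖f 0 0‖ := norm_add_le _ _
    have h3 : α ≤ β := le_max_left _ _
    have h4 : ‖f 0 0‖ ≤ β := le_max_right _ _
    nlinarith [norm_nonneg x, norm_nonneg y, norm_nonneg (f 0 0)]
  set K : ℝ := (B + 1) * Real.exp (4 * β * T) with hKdef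
  have hK0 : 0 ≤ K := by positivity
  set D : ℝ := β * (1 + 2 * K) with hDdef
  have hD0 : 0 ≤ D := by positivity
  refine ⟨max (K ^ p) (D ^ p), ?_⟩
  intro M l ml hM hl1 hml hl hhl hτml hstep Z hZinit hZrec
  have hM0 : (0:ℝ) < (M:ℝ) := by positivity
  have hMl0 : (0:ℝ) < (M:ℝ) ^ l := by positivity
  have hhl0 : 0 < hl := by rw [hhl]; positivity
  have hhlT : hl * (M:ℝ) ^ l = T := by rw [hhl]; field_simp
  -- smallness of the implicit part
  have hx2 : θ * β * hl ≤ 1 / 2 := by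
    rcases eq_or_lt_of_le hθ0 with h | h
    · rw [← h]; norm_num
    · have h1 := hstep h
      have h6β : (0:ℝ) < 6 * β := by linarith
      have h2 : 1 / max (1/2 + α ^ 2) (6 * β) ≤ 1 / (6 * β) := by
        apply one_div_le_one_div_of_le h6β (le_max_right _ _)
      have h3 : θ * ((M:ℝ) * hl) < 1 / (6 * β) := lt_of_lt_of_le h1 h2
      have h4 : hl ≤ (M:ℝ) * hl / 2 := by
        have : (2:ℝ) ≤ (M:ℝ) := by exact_mod_cast hM
        nlinarith
      have h5 : θ * hl ≤ θ * ((M:ℝ) * hl) / 2 := by nlinarith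
      have h6 : θ * ((M:ℝ) * hl) * (6 * β) < 1 := by
        have := (lt_div_iff₀ h6β).mp h3
        linarith
      nlinarith [mul_pos h hhl0]
  set q : ℝ := (1 + 2 * β * hl) * (1 + 2 * θ * β * hl) with hqdef
  have hbhl : 0 ≤ β * hl := by positivity
  have hθbhl : 0 ≤ θ * β * hl := by positivity
  have hq1 : 1 ≤ q := by rw [hqdef]; nlinarith
  have hq0 : 0 ≤ q := by linarith
  -- main induction: uniform bound of the scheme
  have key : ∀ N : ℕ, N ≤ M ^ l → ∀ j : ℤ, -(ml:ℤ) ≤ j → j ≤ N →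
      ‖Z j‖ + 1 ≤ (B + 1) * q ^ N := by
    intro N
    induction N with
    | zero =>
      intro _ j hj1 hj2
      simp only [Nat.cast_zero] at hj2
      rw [hZinit j hj1 hj2]
      have harg : (j:ℝ) * hl ∈ Set.Icc (-τ) 0 := by
        constructor
        · rw [hτml]
          have : -(ml:ℝ) ≤ (j:ℝ) := by exact_mod_cast hj1
          nlinarith
        · have : (j:ℝ) ≤ 0 := by exact_mod_cast hj2
          nlinarith
      have := hB _ harg
      simp only [pow_zero, mul_one]
      linarith
    | succ N ih =>
      intro hN j hj1 hj2
      have hNle : N ≤ M ^ l := le_trans (Nat.le_succ N) hN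
      have hih := ih hNle
      rcases le_or_gt j N with hjN | hjN
      · have h1 := hih j hj1 hjN
        have h2 : (B + 1) * q ^ N ≤ (B + 1) * q ^ (N + 1) := by
          have : q ^ N ≤ q ^ (N + 1) := by
            rw [pow_succ]
            nlinarith [pow_nonneg hq0 N]
          nlinarith
        linarith
      · have hjeq : j = (N:ℤ) + 1 := by omega
        subst hjeq
        have hNlt : (N:ℤ) < (M ^ l : ℕ) := by exact_mod_cast hN
        have hrec := hZrec (N:ℤ) (by positivity) hNlt
        set A : ℝ := (B + 1) * q ^ N with hAdef
        have hA1 : 1 ≤ A := by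
          have : (1:ℝ) ≤ q ^ N := one_le_pow₀ hq1
          nlinarith
        have hml1 : (1:ℤ) ≤ (ml:ℤ) := by exact_mod_cast hml
        have hv : ‖Z (N:ℤ)‖ + 1 ≤ A := hih (N:ℤ) (by omega) le_rfl
        have hw : ‖Z ((N:ℤ) + 1 - (ml:ℤ))‖ + 1 ≤ A := hih _ (by omega) (by omega)
        have hr : ‖Z ((N:ℤ) - (ml:ℤ))‖ + 1 ≤ A := hih _ (by omega) (by omega)
        have hnorm : ‖Z ((N:ℤ) + 1)‖ ≤ ‖Z (N:ℤ)‖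
            + (θ * hl) * ‖f (Z ((N:ℤ)+1)) (Z ((N:ℤ)+1-(ml:ℤ)))‖
            + ((1-θ) * hl) * ‖f (Z (N:ℤ)) (Z ((N:ℤ)-(ml:ℤ)))‖ := by
          have e1 := norm_add_le (Z (N:ℤ) + (θ * hl) • f (Z ((N:ℤ)+1)) (Z ((N:ℤ)+1-(ml:ℤ))))
            (((1-θ) * hl) • f (Z (N:ℤ)) (Z ((N:ℤ)-(ml:ℤ))))
          have e2 := norm_add_le (Z (N:ℤ)) ((θ * hl) • f (Z ((N:ℤ)+1)) (Z ((N:ℤ)+1-(ml:ℤ))))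
          have hθhl : ‖(θ * hl) • f (Z ((N:ℤ)+1)) (Z ((N:ℤ)+1-(ml:ℤ)))‖
              = (θ * hl) * ‖f (Z ((N:ℤ)+1)) (Z ((N:ℤ)+1-(ml:ℤ)))‖ := by
            rw [norm_smul, Real.norm_eq_abs, abs_of_nonneg (by positivity)]
          have h1θhl : ‖((1-θ) * hl) • f (Z (N:ℤ)) (Z ((N:ℤ)-(ml:ℤ)))‖
              = ((1-θ) * hl) * ‖f (Z (N:ℤ)) (Z ((N:ℤ)-(ml:ℤ)))‖ := by
            rw [norm_smul, Real.norm_eq_abs, abs_of_nonneg (by nlinarith)]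
          rw [h1θhl] at e1
          rw [hθhl] at e2
          calc ‖Z ((N:ℤ) + 1)‖
              = ‖Z (N:ℤ) + (θ * hl) • f (Z ((N:ℤ)+1)) (Z ((N:ℤ)+1-(ml:ℤ)))
                + ((1-θ) * hl) • f (Z (N:ℤ)) (Z ((N:ℤ)-(ml:ℤ)))‖ := by
                conv_lhs => rw [hrec]
            _ ≤ _ := by linarith
        have hf1 := hf (Z ((N:ℤ)+1)) (Z ((N:ℤ)+1-(ml:ℤ)))
        have hf2 := hf (Z (N:ℤ)) (Z ((N:ℤ)-(ml:ℤ)))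
        have hgoal : ‖Z ((N:ℤ)+1)‖ + 1 ≤ A * q := by
          set u := ‖Z ((N:ℤ)+1)‖
          have hu0 : 0 ≤ u := norm_nonneg _
          have hθhl0 : 0 ≤ θ * hl := by positivity
          have h1θhl0 : 0 ≤ (1-θ) * hl := by nlinarith
          -- u ≤ v + θhl·β(1+u+w) + (1-θ)hl·β(1+v+r)
          have step1 : u ≤ ‖Z (N:ℤ)‖
              + (θ * hl) * (β * (1 + u + ‖Z ((N:ℤ)+1-(ml:ℤ))‖))
              + ((1-θ) * hl) * (β * (1 + ‖Z (N:ℤ)‖ + ‖Z ((N:ℤ)-(ml:ℤ))‖)) := by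
            have m1 := mul_le_mul_of_nonneg_left hf1 hθhl0
            have m2 := mul_le_mul_of_nonneg_left hf2 h1θhl0
            linarith
          have hx := hx2
          rw [hqdef]
          nlinarith [mul_nonneg hθbhl hu0, mul_nonneg hθbhl (by linarith : (0:ℝ) ≤ A),
            mul_nonneg hbhl (by linarith : (0:ℝ) ≤ A),
            mul_nonneg (mul_nonneg hθ0 hhl0.le) hβ0.le,
            norm_nonneg (Z (N:ℤ)), norm_nonneg (Z ((N:ℤ)+1-(ml:ℤ))),
            norm_nonneg (Z ((N:ℤ)-(ml:ℤ))),
            mul_nonneg hθbhl (mul_nonneg hbhl (by linarith : (0:ℝ) ≤ A))]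
        calc ‖Z ((N:ℤ)+1)‖ + 1 ≤ A * q := hgoal
          _ = (B + 1) * q ^ (N + 1) := by rw [hAdef, pow_succ]; ring
  -- the uniform bound
  have hqexp : q ^ (M ^ l) ≤ Real.exp (4 * β * T) := by
    have h1 : q ≤ Real.exp (4 * β * hl) := by
      have e1 : 1 + 2 * β * hl ≤ Real.exp (2 * β * hl) := by
        have := Real.add_one_le_exp (2 * β * hl); linarith
      have e2 : 1 + 2 * θ * β * hl ≤ Real.exp (2 * β * hl) := by
        have := Real.add_one_le_exp (2 * β * hl)
        nlinarith
      have e3 : (0:ℝ) ≤ 1 + 2 * β * hl := by linarith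
      calc q ≤ Real.exp (2 * β * hl) * Real.exp (2 * β * hl) :=
            mul_le_mul e1 e2 (by linarith) (Real.exp_nonneg _)
        _ = Real.exp (4 * β * hl) := by rw [← Real.exp_add]; ring_nf
    calc q ^ (M ^ l) ≤ Real.exp (4 * β * hl) ^ (M ^ l) :=
          pow_le_pow_left₀ hq0 h1 _
      _ = Real.exp ((M ^ l : ℕ) * (4 * β * hl)) := by rw [Real.exp_nat_mul]
      _ = Real.exp (4 * β * T) := by
          congr 1
          push_cast
          rw [← hhlT]; ring
  have hbound : ∀ j : ℤ, -(ml:ℤ) ≤ j → j ≤ (M ^ l : ℕ) → ‖Z j‖ ≤ K := by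
    intro j hj1 hj2
    have h1 := key (M ^ l) le_rfl j hj1 hj2
    have h2 : (B + 1) * q ^ (M ^ l) ≤ K := by
      rw [hKdef]
      nlinarith
    have hexp : (0:ℝ) < Real.exp (4 * β * T) := Real.exp_pos _
    linarith
  have hp0 : 0 ≤ p := by linarith
  constructor
  · intro j hj0 hjle
    have h1 := hbound j (by omega) hjle
    have h2 : ‖Z j‖ ^ p ≤ K ^ p := Real.rpow_le_rpow (norm_nonneg _) h1 hp0
    exact le_trans h2 (le_max_left _ _)
  · -- increments
    have hinc : ∀ j : ℤ, 0 ≤ j → j < (M ^ l : ℕ) → ‖Z (j+1) - Z j‖ ≤ hl * D := by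
      intro j hj0 hjlt
      have hrec := hZrec j hj0 hjlt
      have hd : Z (j+1) - Z j = (θ * hl) • f (Z (j+1)) (Z (j+1-(ml:ℤ)))
          + ((1-θ) * hl) • f (Z j) (Z (j-(ml:ℤ))) := by
        conv_lhs => rw [hrec]
        rw [add_assoc, add_sub_cancel_left]
      have hθhl0 : 0 ≤ θ * hl := by positivity
      have h1θhl0 : 0 ≤ (1-θ) * hl := by nlinarith
      have hb1 : ‖Z (j+1)‖ ≤ K := hbound _ (by omega) (by omega)
      have hb2 : ‖Z (j+1-(ml:ℤ))‖ ≤ K := hbound _ (by omega) (by omega)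
      have hb3 : ‖Z j‖ ≤ K := hbound _ (by omega) (by omega)
      have hb4 : ‖Z (j-(ml:ℤ))‖ ≤ K := hbound _ (by omega) (by omega)
      have hf1 := hf (Z (j+1)) (Z (j+1-(ml:ℤ)))
      have hf2 := hf (Z j) (Z (j-(ml:ℤ)))
      have hf1' : ‖f (Z (j+1)) (Z (j+1-(ml:ℤ)))‖ ≤ D := by rw [hDdef]; nlinarith
      have hf2' : ‖f (Z j) (Z (j-(ml:ℤ)))‖ ≤ D := by rw [hDdef]; nlinarith
      rw [hd]
      calc ‖(θ * hl) • f (Z (j+1)) (Z (j+1-(ml:ℤ)))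
          + ((1-θ) * hl) • f (Z j) (Z (j-(ml:ℤ)))‖
          ≤ ‖(θ * hl) • f (Z (j+1)) (Z (j+1-(ml:ℤ)))‖
            + ‖((1-θ) * hl) • f (Z j) (Z (j-(ml:ℤ)))‖ := norm_add_le _ _
        _ = (θ * hl) * ‖f (Z (j+1)) (Z (j+1-(ml:ℤ)))‖
            + ((1-θ) * hl) * ‖f (Z j) (Z (j-(ml:ℤ)))‖ := by
            rw [norm_smul, norm_smul, Real.norm_eq_abs, Real.norm_eq_abs,
              abs_of_nonneg hθhl0, abs_of_nonneg h1θhl0]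
        _ ≤ (θ * hl) * D + ((1-θ) * hl) * D := by
            have := mul_le_mul_of_nonneg_left hf1' hθhl0
            have := mul_le_mul_of_nonneg_left hf2' h1θhl0
            linarith
        _ = hl * D := by ring
    -- telescoping
    have htel : ∀ (n0 : ℤ), 0 ≤ n0 → ∀ k : ℕ, n0 + k ≤ (M ^ l : ℕ) →
        ‖Z (n0 + k) - Z n0‖ ≤ k * (hl * D) := by
      intro n0 hn0 k
      induction k with
      | zero => intro _; simp
      | succ k ih =>
        intro hk
        have hk' : n0 + k ≤ (M ^ l : ℕ) := by push_cast at hk ⊢; omega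
        have h1 := ih hk'
        have h2 : n0 + k < (M ^ l : ℕ) := by push_cast at hk ⊢; omega
        have h3 := hinc (n0 + k) (by omega) h2
        have he : Z (n0 + (k+1:ℕ)) - Z n0
            = (Z (n0 + k + 1) - Z (n0 + k)) + (Z (n0 + k) - Z n0) := by
          push_cast
          have : n0 + ((k:ℤ)+1) = n0 + k + 1 := by ring
          rw [this]; abel
        rw [he]
        calc ‖(Z (n0 + k + 1) - Z (n0 + k)) + (Z (n0 + k) - Z n0)‖
            ≤ ‖Z (n0 + k + 1) - Z (n0 + k)‖ + ‖Z (n0 + k) - Z n0‖ := norm_add_le _ _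
          _ ≤ hl * D + k * (hl * D) := by linarith
          _ = ((k+1:ℕ):ℝ) * (hl * D) := by push_cast; ring
    intro n k hn hk1 hkM
    have hsum : n * M + k ≤ M ^ l := by
      have h1 : n + 1 ≤ M ^ (l-1) := hn
      have h2 : (n + 1) * M ≤ M ^ (l-1) * M := Nat.mul_le_mul_right M h1
      have h3 : M ^ (l-1) * M = M ^ l := by
        rw [← pow_succ, Nat.sub_add_cancel hl1]
      nlinarith
    have hn0 : (0:ℤ) ≤ (n:ℤ) * M := by positivity
    have h4 : (n:ℤ) * M + k ≤ (M ^ l : ℕ) := by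
      have : (n * M + k : ℕ) ≤ (M ^ l : ℕ) := hsum
      exact_mod_cast this
    have h5 := htel ((n:ℤ) * M) hn0 k h4
    have h6 : ‖Z ((n:ℤ) * M + k) - Z ((n:ℤ) * M)‖ ≤ D * ((M:ℝ) * hl) := by
      have hkM' : (k:ℝ) ≤ (M:ℝ) := by exact_mod_cast hkM
      calc ‖Z ((n:ℤ) * M + k) - Z ((n:ℤ) * M)‖ ≤ k * (hl * D) := h5
        _ ≤ (M:ℝ) * (hl * D) := by
            have := mul_nonneg hhl0.le hD0
            nlinarith
        _ = D * ((M:ℝ) * hl) := by ring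
    have h7 : ‖Z ((n:ℤ) * M + k) - Z ((n:ℤ) * M)‖ ^ p ≤ (D * ((M:ℝ) * hl)) ^ p :=
      Real.rpow_le_rpow (norm_nonneg _) h6 hp0
    have h8 : (D * ((M:ℝ) * hl)) ^ p = D ^ p * ((M:ℝ) ^ p * hl ^ p) := by
      rw [Real.mul_rpow hD0 (by positivity), Real.mul_rpow hM0.le hhl0.le]
    have h9 : D ^ p ≤ max (K ^ p) (D ^ p) := le_max_right _ _
    have h10 : (0:ℝ) ≤ (M:ℝ) ^ p * hl ^ p := by positivity
    calc ‖Z ((n:ℤ) * M + k) - Z ((n:ℤ) * M)‖ ^ p ≤ D ^ p * ((M:ℝ) ^ p * hl ^ p) := by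
          rw [← h8]; exact h7
      _ ≤ max (K ^ p) (D ^ p) * ((M:ℝ) ^ p * hl ^ p) := by nlinarith
      _ = max (K ^ p) (D ^ p) * (M:ℝ) ^ p * hl ^ p := by ring

end
end

section
/- Under assumption (H1), the taming error is of order h^δ with polynomially growing coefficient: for every real p ≥ 2 there exists a constant ᾱ₂, depending only on α₂, |f(0,0)|, p and r, such that for all x, y ∈ ℝ^a, |f(x,y) − f_h(x,y)|^p ≤ ᾱ₂ h^{δp} (1 + |x|^{2(r+1)p} + |y|^{2(r+1)p}). -/
open RealInnerProductSpace

/-!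
Since `f - f_h = (h^δ |f| / (1 + h^δ |f|)) f`, the taming error is at most `h^δ |f|²`. Taking
`(x̄, ȳ) = (0, 0)` in the growth condition gives
`|f(x,y)| ≤ (6α₂ + |f(0,0)|) · max(1, |x|, |y|)^(r+1)`, and raising to the `p`-th power gives
the claim with `ᾱ₂ = (6α₂ + |f(0,0)|)^(2p)`.
-/

lemma norm_sub_inv_one_add_mul_norm_smul_le {E : Type*} [SeminormedAddCommGroup E]
    [NormedSpace ℝ E] {c : ℝ} (hc : 0 ≤ c) (v : E) :
    ‖v - (1 + c * ‖v‖)⁻¹ • v‖ ≤ c * ‖v‖ ^ 2 := by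
  set t := c * ‖v‖
  have ht : 0 ≤ t := by positivity
  have hcoef : 1 - (1 + t)⁻¹ = t / (1 + t) := by field_simp; ring
  calc ‖v - (1 + t)⁻¹ • v‖ = ‖(t / (1 + t)) • v‖ := by rw [← hcoef, sub_smul, one_smul]
    _ = t / (1 + t) * ‖v‖ := by rw [norm_smul, Real.norm_of_nonneg (by positivity)]
    _ ≤ t * ‖v‖ := by gcongr; exact div_le_self ht (by linarith)
    _ = c * ‖v‖ ^ 2 := by ring

lemma rpow_max_one_max_le {X Y : ℝ} (hX : 0 ≤ X) (hY : 0 ≤ Y) (e : ℝ) :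
    max 1 (max X Y) ^ e ≤ 1 + X ^ e + Y ^ e := by
  have hXe := Real.rpow_nonneg hX e
  have hYe := Real.rpow_nonneg hY e
  rcases max_choice 1 (max X Y) with h | h <;> rw [h]
  · rw [Real.one_rpow]; linarith
  · rcases max_choice X Y with h' | h' <;> rw [h'] <;> linarith

lemma norm_le_mul_max_one_max_rpow {E F : Type*} [SeminormedAddCommGroup E]
    [SeminormedAddCommGroup F] {f : E → E → F} {α r : ℝ} (hα : 0 ≤ α) (hr : 0 ≤ r)
    (hf : ∀ x y, ‖f x y - f 0 0‖ ≤ α * (1 + ‖x‖ ^ r + ‖y‖ ^ r) * (‖x‖ + ‖y‖)) (x y : E) :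
    ‖f x y‖ ≤ (6 * α + ‖f 0 0‖) * max 1 (max ‖x‖ ‖y‖) ^ (r + 1) := by
  set W := max 1 (max ‖x‖ ‖y‖)
  have hW : 1 ≤ W := le_max_left _ _
  have hxW : ‖x‖ ≤ W := (le_max_left _ _).trans (le_max_right _ _)
  have hyW : ‖y‖ ≤ W := (le_max_right _ _).trans (le_max_right _ _)
  have hWr : 1 ≤ W ^ r := Real.one_le_rpow hW hr
  have hpoly : 1 + ‖x‖ ^ r + ‖y‖ ^ r ≤ 3 * W ^ r := by
    have := Real.rpow_le_rpow (norm_nonneg x) hxW hr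
    have := Real.rpow_le_rpow (norm_nonneg y) hyW hr
    linarith
  have hWr1 : 1 ≤ W ^ (r + 1) := Real.one_le_rpow hW (by linarith)
  calc ‖f x y‖ ≤ ‖f x y - f 0 0‖ + ‖f 0 0‖ := norm_le_norm_sub_add _ _
    _ ≤ α * (3 * W ^ r) * (2 * W) + ‖f 0 0‖ * W ^ (r + 1) := by
        gcongr
        · exact (hf x y).trans (by gcongr; linarith)
        · exact le_mul_of_one_le_right (norm_nonneg _) hWr1
    _ = (6 * α + ‖f 0 0‖) * W ^ (r + 1) := by
        rw [Real.rpow_add_one (by positivity)]; ring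

theorem stmt15_general {a : ℕ}
    (f : EuclideanSpace ℝ (Fin a) → EuclideanSpace ℝ (Fin a) → EuclideanSpace ℝ (Fin a))
    (α₂ p r : ℝ) (hα₂ : 1 < α₂) (hp : 2 ≤ p) (hr : 1 ≤ r)
    (hH1b : ∀ x y x' y' : EuclideanSpace ℝ (Fin a),
      ‖f x y - f x' y'‖ ≤
        α₂ * (1 + ‖x‖ ^ r + ‖x'‖ ^ r + ‖y‖ ^ r + ‖y'‖ ^ r) * (‖x - x'‖ + ‖y - y'‖)) :
    ∃ αBar₂ : ℝ, ∀ h δ : ℝ, h ∈ Set.Ioo (0:ℝ) 1 → δ ∈ Set.Ioc (0:ℝ) (1/2) →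
      ∀ (fh : EuclideanSpace ℝ (Fin a) → EuclideanSpace ℝ (Fin a) →
          EuclideanSpace ℝ (Fin a)),
        (∀ x y, fh x y = (1 + h ^ δ * ‖f x y‖)⁻¹ • f x y) →
        ∀ x y : EuclideanSpace ℝ (Fin a),
          ‖f x y - fh x y‖ ^ p ≤
            αBar₂ * h ^ (δ * p) *
              (1 + ‖x‖ ^ (2 * (r + 1) * p) + ‖y‖ ^ (2 * (r + 1) * p)) := by
  have hgrowth (x y : EuclideanSpace ℝ (Fin a)) :
      ‖f x y - f 0 0‖ ≤ α₂ * (1 + ‖x‖ ^ r + ‖y‖ ^ r) * (‖x‖ + ‖y‖) := by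
    simpa [Real.zero_rpow (by linarith : r ≠ 0)] using hH1b x y 0 0
  set M := 6 * α₂ + ‖f 0 0‖
  have hM : 0 ≤ M := by positivity
  refine ⟨M ^ (2 * p), fun h δ ⟨h0, _⟩ _ fh hfh x y => ?_⟩
  set W := max 1 (max ‖x‖ ‖y‖)
  have hW : 0 ≤ W := zero_le_one.trans (le_max_left _ _)
  have hf := norm_le_mul_max_one_max_rpow (by linarith) (by linarith) hgrowth x y
  calc ‖f x y - fh x y‖ ^ p ≤ (h ^ δ * ‖f x y‖ ^ 2) ^ p := by
        rw [hfh]; gcongr; exact norm_sub_inv_one_add_mul_norm_smul_le (by positivity) _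
    _ ≤ (h ^ δ * (M * W ^ (r + 1)) ^ 2) ^ p := by gcongr
    _ = M ^ (2 * p) * h ^ (δ * p) * W ^ (2 * (r + 1) * p) := by
        rw [← Real.rpow_natCast, Real.mul_rpow hM (by positivity), ← Real.rpow_mul hW,
          Real.mul_rpow (by positivity) (by positivity), Real.mul_rpow (by positivity)
          (by positivity), ← Real.rpow_mul h0.le, ← Real.rpow_mul hM, ← Real.rpow_mul hW]
        push_cast; ring_nf
    _ ≤ M ^ (2 * p) * h ^ (δ * p) *
          (1 + ‖x‖ ^ (2 * (r + 1) * p) + ‖y‖ ^ (2 * (r + 1) * p)) := by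
        gcongr; exact rpow_max_one_max_le (norm_nonneg x) (norm_nonneg y) _

/-- Under assumption (H1), the taming error is of order `h^δ` with a
polynomially growing coefficient: for every `p ≥ 2` there is a constant `ᾱ₂`, depending only
on `α₂`, `|f(0,0)|`, `p` and `r` (in particular not on `h`, `δ`, `x`, `y`), such that
`|f(x,y) − f_h(x,y)|^p ≤ ᾱ₂ h^{δp} (1 + |x|^{2(r+1)p} + |y|^{2(r+1)p})`. -/
theorem stmt15 {a d : ℕ} (ha : 1 ≤ a) (hd : 1 ≤ d)
    (f : EuclideanSpace ℝ (Fin a) → EuclideanSpace ℝ (Fin a) → EuclideanSpace ℝ (Fin a))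
    (g : EuclideanSpace ℝ (Fin a) → EuclideanSpace ℝ (Fin a) →
      EuclideanSpace ℝ (Fin a × Fin d))
    (α₁ α₂ p r ε : ℝ) (hα₁ : 1 < α₁) (hα₂ : 1 < α₂) (hp : 2 ≤ p) (hr : 1 ≤ r)
    (hε : ε ∈ Set.Ioo (0:ℝ) 1)
    (hH1a : ∀ x y x' y' : EuclideanSpace ℝ (Fin a),
      2 * ⟪x - x', f x y - f x' y'⟫ + (p - 1) * ε ^ 2 * ‖g x y - g x' y'‖ ^ 2 ≤
        α₁ * (‖x - x'‖ ^ 2 + ‖y - y'‖ ^ 2))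
    (hH1b : ∀ x y x' y' : EuclideanSpace ℝ (Fin a),
      ‖f x y - f x' y'‖ ≤
        α₂ * (1 + ‖x‖ ^ r + ‖x'‖ ^ r + ‖y‖ ^ r + ‖y'‖ ^ r) * (‖x - x'‖ + ‖y - y'‖)) :
    ∃ αBar₂ : ℝ, ∀ h δ : ℝ, h ∈ Set.Ioo (0:ℝ) 1 → δ ∈ Set.Ioc (0:ℝ) (1/2) →
      ∀ (fh : EuclideanSpace ℝ (Fin a) → EuclideanSpace ℝ (Fin a) →
          EuclideanSpace ℝ (Fin a)),
        (∀ x y, fh x y = (1 + h ^ δ * ‖f x y‖)⁻¹ • f x y) →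
        ∀ x y : EuclideanSpace ℝ (Fin a),
          ‖f x y - fh x y‖ ^ p ≤
            αBar₂ * h ^ (δ * p) *
              (1 + ‖x‖ ^ (2 * (r + 1) * p) + ‖y‖ ^ (2 * (r + 1) * p)) :=
  stmt15_general f α₂ p r hα₂ hp hr hH1b
end

section
/- Under assumptions (H1) and (H2) and the step-size restriction, the deterministic tamed theta EM approximation Z_{h_l} of the delay ODE (the tamed scheme with ε = 0) satisfies: for every p ≥ 2 there exists a constant C, independent of M and l, such that |Z_{h_l}(t)|^p ≤ C for all fine grid points t ∈ [0, T], and sup_{0 ≤ n < M^{l−1}, 1 ≤ k ≤ M} |Z_{h_l}(t_n^k) − Z_{h_l}(t_n)|^p ≤ C M^{(1−δ)p} h_l^{(1−δ)p}. -/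
open RealInnerProductSpace

noncomputable section

lemma stmt17_sq_aux (T₁ x y : ℝ) (hx : 0 ≤ x) (h : x ≤ y + T₁) :
    x^2 ≤ 2*y^2 + 2*T₁^2 := by
  have hx2 : x^2 ≤ (y+T₁)^2 := pow_le_pow_left₀ hx h 2
  nlinarith [sq_nonneg (y - T₁)]

set_option maxHeartbeats 1000000 in
/-- Under assumptions (H1), (H2) and the step-size restriction, the
deterministic tamed theta EM approximation `Z_{h_l}` of the delay ODE (the tamed scheme with
`ε = 0`) satisfies, for every `p ≥ 2` and a constant `C` independent of `M` and `l`: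
`|Z_{h_l}(t)|^p ≤ C` on all fine grid points `t ∈ [0, T]`, and
`|Z_{h_l}(t_n^k) − Z_{h_l}(t_n)|^p ≤ C M^{(1−δ)p} h_l^{(1−δ)p}` for
`0 ≤ n < M^{l−1}`, `1 ≤ k ≤ M`. -/
theorem stmt17
    (a : ℕ) (ha : 1 ≤ a)
    (f : EuclideanSpace ℝ (Fin a) → EuclideanSpace ℝ (Fin a) → EuclideanSpace ℝ (Fin a))
    (α₁ α₂ r : ℝ) (hα₁ : 1 < α₁) (hα₂ : 1 < α₂) (hr : 1 ≤ r)
    -- (H1): one-sided Lipschitz condition on the drift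
    (hH1a : ∀ x y x' y' : EuclideanSpace ℝ (Fin a),
      2 * ⟪x - x', f x y - f x' y'⟫ ≤ α₁ * (‖x - x'‖ ^ 2 + ‖y - y'‖ ^ 2))
    -- (H1): polynomial Lipschitz condition on the drift
    (hH1b : ∀ x y x' y' : EuclideanSpace ℝ (Fin a),
      ‖f x y - f x' y'‖ ≤
        α₂ * (1 + ‖x‖ ^ r + ‖x'‖ ^ r + ‖y‖ ^ r + ‖y'‖ ^ r) * (‖x - x'‖ + ‖y - y'‖))
    (θ δ : ℝ) (hθ : θ ∈ Set.Icc (0:ℝ) 1) (hδ : δ ∈ Set.Ioc (0:ℝ) (1/2))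
    (τ T : ℝ) (hτ : 0 < τ) (hT : 0 < T)
    (ξ : ℝ → EuclideanSpace ℝ (Fin a)) (hξ : Continuous ξ)
    (p : ℝ) (hp : 2 ≤ p) :
    -- C is independent of M and l
    ∃ C : ℝ, ∀ (M l ml : ℕ), 2 ≤ M → 1 ≤ l → 0 < ml →
      ∀ hl hl1 : ℝ, hl = T / (M:ℝ) ^ l → hl1 = T / (M:ℝ) ^ (l-1) →
      τ = ml * hl →
      -- step-size restriction
      (0 < θ → θ * hl1 < 2 / α₁) →
      -- the tamed drift
      ∀ fh : EuclideanSpace ℝ (Fin a) → EuclideanSpace ℝ (Fin a) →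
          EuclideanSpace ℝ (Fin a),
        (∀ x y, fh x y = (1 + hl1 ^ δ * ‖f x y‖)⁻¹ • f x y) →
      ∀ Z : ℤ → EuclideanSpace ℝ (Fin a),
        -- initial data on the fine grid points of [−τ, 0]
        (∀ j : ℤ, -(ml:ℤ) ≤ j → j ≤ 0 → Z j = ξ (j * hl)) →
        -- deterministic tamed theta EM recursion on the fine grid
        (∀ j : ℤ, 0 ≤ j → j < (M ^ l : ℕ) →
          Z (j+1) = Z j + (θ * hl) • fh (Z (j+1)) (Z (j+1-(ml:ℤ)))
            + ((1-θ) * hl) • fh (Z j) (Z (j-(ml:ℤ)))) →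
        (∀ j : ℤ, 0 ≤ j → j ≤ (M ^ l : ℕ) → ‖Z j‖ ^ p ≤ C) ∧
        (∀ n k : ℕ, n < M ^ (l-1) → 1 ≤ k → k ≤ M →
          ‖Z ((n:ℤ) * M + k) - Z ((n:ℤ) * M)‖ ^ p ≤
            C * (M:ℝ) ^ ((1-δ) * p) * hl ^ ((1-δ) * p)) := by
  obtain ⟨hθ0, hθ1⟩ := hθ
  obtain ⟨hδ0, hδ2⟩ := hδ
  have hα₁0 : (0:ℝ) < α₁ := by linarith
  obtain ⟨S, hS⟩ := (isCompact_Icc (a := -τ) (b := (0:ℝ))).exists_bound_of_continuousOn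
      hξ.continuousOn
  have hS0 : 0 ≤ S := le_trans (norm_nonneg _) (hS 0 ⟨by linarith, le_refl 0⟩)
  set K : ℝ := ‖f 0 0‖ with hKdef
  have hK0 : 0 ≤ K := norm_nonneg _
  set T₁ : ℝ := max T 1 with hT₁def
  have hT₁1 : (1:ℝ) ≤ T₁ := le_max_right _ _
  have hTT₁ : T ≤ T₁ := le_max_left _ _
  have hT₁0 : (0:ℝ) < T₁ := by linarith
  set C₂ : ℝ := α₁ * (4*T₁^2 + S^2) + 2*T₁^2 + K^2 + T₁ with hC₂def
  set A : ℝ := max ((S+T₁)^2) C₂ with hAdef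
  have hA0 : 0 ≤ A := le_trans (sq_nonneg _) (le_max_left _ _)
  have hAC₂ : C₂ ≤ A := le_max_right _ _
  set B2 : ℝ := 2*A*Real.exp ((4*α₁+3)*T) + 2*T₁^2 with hB2def
  set B₁ : ℝ := max (Real.sqrt B2) 1 with hB₁def
  have hB₁1 : (1:ℝ) ≤ B₁ := le_max_right _ _
  refine ⟨max (B₁ ^ p) 1, ?_⟩
  set C : ℝ := max (B₁ ^ p) 1 with hCdef
  have hC1 : (1:ℝ) ≤ C := le_max_right _ _
  intro M l ml hM hl' hml hl hl1 hhl hhl1 hτml _hstep fh hfh Z hZ0 hZrec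
  -- basic facts about step sizes
  have hM0 : (0:ℝ) < M := by
    have : (2:ℝ) ≤ M := by exact_mod_cast hM
    linarith
  have hM2 : (2:ℝ) ≤ M := by exact_mod_cast hM
  have hMl0 : (0:ℝ) < (M:ℝ)^l := pow_pos hM0 l
  have hlpos : 0 < hl := by rw [hhl]; positivity
  have hMpowl : (M:ℝ)^l = (M:ℝ) * (M:ℝ)^(l-1) := by
    conv_lhs => rw [show l = (l-1)+1 from (Nat.succ_pred_eq_of_pos hl').symm]
    ring
  have hl1M : hl1 = M * hl := by
    rw [hhl, hhl1, hMpowl]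
    field_simp
  have hl1pos : 0 < hl1 := by rw [hl1M]; positivity
  have hl1T : hl1 ≤ T := by
    rw [hhl1]
    exact div_le_self hT.le (one_le_pow₀ (by linarith : (1:ℝ) ≤ (M:ℝ)))
  set c : ℝ := hl1 ^ δ with hcdef
  have hc0 : 0 < c := Real.rpow_pos_of_pos hl1pos δ
  have hpowT₁ : ∀ e : ℝ, 0 ≤ e → e ≤ 1 → hl1 ^ e ≤ T₁ := by
    intro e he0 he1
    rcases le_total hl1 1 with h | h
    · exact le_trans (Real.rpow_le_one hl1pos.le h he0) hT₁1
    · calc hl1 ^ e ≤ hl1 ^ (1:ℝ) := Real.rpow_le_rpow_of_exponent_le h he1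
        _ = hl1 := Real.rpow_one _
        _ ≤ T₁ := le_trans hl1T hTT₁
  -- bound on the tamed drift
  have hfhn : ∀ u v, ‖fh u v‖ ≤ c⁻¹ := by
    intro u v
    rw [hfh, norm_smul]
    have hw0 : 0 ≤ ‖f u v‖ := norm_nonneg _
    have hD : (0:ℝ) < 1 + c * ‖f u v‖ := by positivity
    rw [Real.norm_eq_abs, abs_of_nonneg (inv_nonneg.2 hD.le), inv_mul_eq_div, div_le_iff₀ hD]
    have hi : c⁻¹ * (1 + c * ‖f u v‖) = c⁻¹ + ‖f u v‖ := by
      rw [mul_add, mul_one, inv_mul_cancel_left₀ hc0.ne']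
    rw [hi]
    have : (0:ℝ) ≤ c⁻¹ := inv_nonneg.2 hc0.le
    linarith
  have hlQ1 : hl1 * c⁻¹ = hl1 ^ ((1:ℝ) - δ) := by
    rw [hcdef, Real.rpow_sub hl1pos, Real.rpow_one, div_eq_mul_inv]
  have hlQ : hl * c⁻¹ ≤ T₁ := by
    have h1 : hl * c⁻¹ ≤ hl1 * c⁻¹ := by
      apply mul_le_mul_of_nonneg_right _ (inv_nonneg.2 hc0.le)
      rw [hl1M]
      exact le_mul_of_one_le_left hlpos.le (by linarith)
    calc hl * c⁻¹ ≤ hl1 * c⁻¹ := h1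
      _ = hl1 ^ ((1:ℝ) - δ) := hlQ1
      _ ≤ T₁ := hpowT₁ _ (by linarith) (by linarith)
  have hlQ2 : hl * (c⁻¹ * c⁻¹) ≤ T₁ := by
    have h1 : hl * (c⁻¹ * c⁻¹) ≤ hl1 * (c⁻¹ * c⁻¹) := by
      apply mul_le_mul_of_nonneg_right _ (mul_nonneg (inv_nonneg.2 hc0.le) (inv_nonneg.2 hc0.le))
      rw [hl1M]
      exact le_mul_of_one_le_left hlpos.le (by linarith)
    have h2 : hl1 * (c⁻¹ * c⁻¹) = hl1 ^ ((1:ℝ) - 2*δ) := by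
      rw [hcdef, show (1:ℝ) - 2*δ = 1 + -δ + -δ by ring, Real.rpow_add hl1pos,
        Real.rpow_add hl1pos, Real.rpow_one, Real.rpow_neg hl1pos.le]
      ring
    calc hl * (c⁻¹ * c⁻¹) ≤ hl1 * (c⁻¹ * c⁻¹) := h1
      _ = hl1 ^ ((1:ℝ) - 2*δ) := h2
      _ ≤ T₁ := hpowT₁ _ (by linarith) (by linarith)
  have hsq : ∀ x y : ℝ, 0 ≤ x → x ≤ y + T₁ → x^2 ≤ 2*y^2 + 2*T₁^2 :=
    fun x y hx h => stmt17_sq_aux T₁ x y hx h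
  -- inner product bound for the tamed drift
  have hInner : ∀ u v : EuclideanSpace ℝ (Fin a),
      ⟪u, fh u v⟫ ≤ α₁/2 * (‖u‖^2 + ‖v‖^2) + (‖u‖^2 + K^2)/2 := by
    intro u v
    rw [hfh, real_inner_smul_right]
    have hR0 : 0 ≤ α₁/2 * (‖u‖^2 + ‖v‖^2) + (‖u‖^2 + K^2)/2 := by
      have h1 := mul_nonneg hα₁0.le (add_nonneg (sq_nonneg ‖u‖) (sq_nonneg ‖v‖))
      linarith [sq_nonneg ‖u‖, sq_nonneg K]
    have ht : ⟪u, f u v⟫ ≤ α₁/2 * (‖u‖^2 + ‖v‖^2) + (‖u‖^2 + K^2)/2 := by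
      have h1 := hH1a u v 0 0
      simp only [sub_zero] at h1
      have h2 : ⟪u, f u v - f 0 0⟫ = ⟪u, f u v⟫ - ⟪u, f 0 0⟫ := inner_sub_right _ _ _
      rw [h2] at h1
      have h3 : ⟪u, f 0 0⟫ ≤ ‖u‖ * K := real_inner_le_norm u _
      have h4 : ‖u‖ * K ≤ (‖u‖^2 + K^2)/2 := by linarith [sq_nonneg (‖u‖ - K)]
      linarith
    have hD1 : (1:ℝ) ≤ 1 + c * ‖f u v‖ := by
      have := mul_nonneg hc0.le (norm_nonneg (f u v))
      linarith
    rcases le_total (⟪u, f u v⟫ : ℝ) 0 with h | h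
    · have : (1 + c * ‖f u v‖)⁻¹ * ⟪u, f u v⟫ ≤ 0 :=
        mul_nonpos_of_nonneg_of_nonpos (inv_nonneg.2 (by linarith)) h
      linarith
    · have hi1 : (1 + c * ‖f u v‖)⁻¹ ≤ 1 := inv_le_one_of_one_le₀ hD1
      calc (1 + c * ‖f u v‖)⁻¹ * ⟪u, f u v⟫ ≤ 1 * ⟪u, f u v⟫ :=
            mul_le_mul_of_nonneg_right hi1 h
        _ = ⟪u, f u v⟫ := one_mul _
        _ ≤ _ := ht
  -- the auxiliary sequence Y
  set Y : ℕ → EuclideanSpace ℝ (Fin a) :=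
    fun j => Z (j:ℤ) - (θ*hl) • fh (Z (j:ℤ)) (Z ((j:ℤ) - ml)) with hYdef
  have hsmb : ∀ j : ℕ, ‖(θ*hl) • fh (Z (j:ℤ)) (Z ((j:ℤ) - ml))‖ ≤ T₁ := by
    intro j
    rw [norm_smul, Real.norm_eq_abs, abs_of_nonneg (mul_nonneg hθ0 hlpos.le)]
    have hg := hfhn (Z (j:ℤ)) (Z ((j:ℤ) - ml))
    have hgn : 0 ≤ ‖fh (Z (j:ℤ)) (Z ((j:ℤ) - ml))‖ := norm_nonneg _
    have h1 : θ * hl * ‖fh (Z (j:ℤ)) (Z ((j:ℤ) - ml))‖ ≤ hl * c⁻¹ := by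
      calc θ * hl * ‖fh (Z (j:ℤ)) (Z ((j:ℤ) - ml))‖
          ≤ 1 * hl * ‖fh (Z (j:ℤ)) (Z ((j:ℤ) - ml))‖ := by
            apply mul_le_mul_of_nonneg_right _ hgn
            exact mul_le_mul_of_nonneg_right hθ1 hlpos.le
        _ = hl * ‖fh (Z (j:ℤ)) (Z ((j:ℤ) - ml))‖ := by ring
        _ ≤ hl * c⁻¹ := mul_le_mul_of_nonneg_left hg hlpos.le
    linarith
  have hZYn : ∀ j : ℕ, ‖Z (j:ℤ)‖ ≤ ‖Y j‖ + T₁ := by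
    intro j
    have hdec : Z (j:ℤ) = Y j + (θ*hl) • fh (Z (j:ℤ)) (Z ((j:ℤ) - ml)) := by
      simp only [hYdef, sub_add_cancel]
    calc ‖Z (j:ℤ)‖ = ‖Y j + (θ*hl) • fh (Z (j:ℤ)) (Z ((j:ℤ) - ml))‖ := by rw [← hdec]
      _ ≤ ‖Y j‖ + ‖(θ*hl) • fh (Z (j:ℤ)) (Z ((j:ℤ) - ml))‖ := norm_add_le _ _
      _ ≤ ‖Y j‖ + T₁ := by linarith [hsmb j]
  have hYZn : ∀ j : ℕ, ‖Y j‖ ≤ ‖Z (j:ℤ)‖ + T₁ := by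
    intro j
    calc ‖Y j‖ ≤ ‖Z (j:ℤ)‖ + ‖(θ*hl) • fh (Z (j:ℤ)) (Z ((j:ℤ) - ml))‖ := norm_sub_le _ _
      _ ≤ ‖Z (j:ℤ)‖ + T₁ := by linarith [hsmb j]
  -- one-step estimate
  have hstep2 : ∀ j : ℕ, j < M^l →
      ‖Y (j+1)‖^2 ≤ ‖Y j‖^2
        + hl * (α₁ * (‖Z (j:ℤ)‖^2 + ‖Z ((j:ℤ) - ml)‖^2) + ‖Z (j:ℤ)‖^2 + K^2) + hl * T₁ := by
    intro j hj
    have hrec := hZrec (j:ℤ) (Int.natCast_nonneg j) (by exact_mod_cast hj)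
    have hYsucc : Y (j+1) = Y j + hl • fh (Z (j:ℤ)) (Z ((j:ℤ) - ml)) := by
      simp only [hYdef]
      push_cast
      nth_rewrite 1 [hrec]
      module
    set g := fh (Z (j:ℤ)) (Z ((j:ℤ) - ml)) with hgdef
    have hexp : ‖Y j + hl • g‖^2 = ‖Y j‖^2 + 2*(hl * ⟪Y j, g⟫) + hl^2 * ‖g‖^2 := by
      rw [norm_add_sq_real, real_inner_smul_right, norm_smul, Real.norm_eq_abs,
        abs_of_nonneg hlpos.le, mul_pow]
    have hYg : ⟪Y j, g⟫ = ⟪Z (j:ℤ), g⟫ - (θ*hl) * ‖g‖^2 := by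
      simp only [hYdef, hgdef]
      rw [inner_sub_left, real_inner_smul_left, real_inner_self_eq_norm_sq]
    have hiYg : ⟪Y j, g⟫ ≤ α₁/2 * (‖Z (j:ℤ)‖^2 + ‖Z ((j:ℤ) - ml)‖^2)
        + (‖Z (j:ℤ)‖^2 + K^2)/2 := by
      have h2 := hInner (Z (j:ℤ)) (Z ((j:ℤ) - ml))
      have h3 : 0 ≤ (θ*hl) * ‖g‖^2 :=
        mul_nonneg (mul_nonneg hθ0 hlpos.le) (sq_nonneg _)
      rw [hYg]
      linarith
    have hg2 : hl^2 * ‖g‖^2 ≤ hl * T₁ := by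
      have hg := hfhn (Z (j:ℤ)) (Z ((j:ℤ) - ml))
      have hgn : 0 ≤ ‖g‖ := norm_nonneg _
      have hcn : 0 ≤ c⁻¹ := inv_nonneg.2 hc0.le
      have h1 : ‖g‖^2 ≤ c⁻¹ * c⁻¹ := by linarith [pow_le_pow_left₀ hgn hg 2, sq_nonneg c⁻¹,
        (by ring : (c⁻¹)^2 = c⁻¹ * c⁻¹)]
      have h2 : hl * ‖g‖^2 ≤ hl * (c⁻¹ * c⁻¹) := mul_le_mul_of_nonneg_left h1 hlpos.le
      calc hl^2 * ‖g‖^2 = hl * (hl * ‖g‖^2) := by ring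
        _ ≤ hl * (hl * (c⁻¹ * c⁻¹)) := mul_le_mul_of_nonneg_left h2 hlpos.le
        _ ≤ hl * T₁ := mul_le_mul_of_nonneg_left hlQ2 hlpos.le
    rw [hYsucc, hexp]
    have h4 : hl * ⟪Y j, g⟫ ≤ hl * (α₁/2 * (‖Z (j:ℤ)‖^2 + ‖Z ((j:ℤ) - ml)‖^2)
        + (‖Z (j:ℤ)‖^2 + K^2)/2) := mul_le_mul_of_nonneg_left hiYg hlpos.le
    linarith
  -- growth factor
  set G : ℝ := 1 + (4*α₁+3)*hl with hGdef
  have hG1 : (1:ℝ) ≤ G := by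
    have := mul_nonneg (by linarith : (0:ℝ) ≤ 4*α₁+3) hlpos.le
    rw [hGdef]; linarith
  have hG0 : (0:ℝ) ≤ G := by linarith
  -- main induction
  have key : ∀ j : ℕ, j ≤ M^l → ‖Y j‖^2 ≤ A * G^j := by
    intro j
    induction j using Nat.strong_induction_on with
    | _ j ih =>
      cases j with
      | zero =>
        intro _
        have hZ00 : Z ((0:ℕ):ℤ) = ξ 0 := by
          have := hZ0 0 (by exact_mod_cast Int.neg_nonpos_of_nonneg (Int.natCast_nonneg ml))
            (le_refl 0)
          simpa using this
        have h1 : ‖Y 0‖ ≤ S + T₁ := by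
          have h2 := hYZn 0
          have h3 : ‖Z ((0:ℕ):ℤ)‖ ≤ S := by
            rw [hZ00]; exact hS 0 ⟨by linarith, le_refl 0⟩
          linarith
        have h2 : ‖Y 0‖^2 ≤ (S+T₁)^2 := pow_le_pow_left₀ (norm_nonneg (Y 0)) h1 2
        calc ‖Y 0‖^2 ≤ (S+T₁)^2 := h2
          _ ≤ A := le_max_left _ _
          _ = A * G^0 := by simp
      | succ j =>
        intro hj1
        have hjN : j < M^l := Nat.lt_of_succ_le hj1
        have ihj : ‖Y j‖^2 ≤ A * G^j := ih j (Nat.lt_succ_self j) hjN.le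
        have hGj1 : (1:ℝ) ≤ G^j := one_le_pow₀ hG1
        have hAGj0 : 0 ≤ A * G^j := mul_nonneg hA0 (by linarith)
        have hu2 : ‖Z (j:ℤ)‖^2 ≤ 2*‖Y j‖^2 + 2*T₁^2 :=
          hsq _ _ (norm_nonneg _) (hZYn j)
        have hv2 : ‖Z ((j:ℤ) - ml)‖^2 ≤ S^2 + 2*(A*G^j) + 2*T₁^2 := by
          rcases lt_or_ge j ml with h | h
          · have hc1 : -(ml:ℤ) ≤ (j:ℤ) - ml := by omega
            have hc2 : (j:ℤ) - ml ≤ 0 := by omega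
            have hZv := hZ0 _ hc1 hc2
            have hmem : (((j:ℤ) - ml : ℤ):ℝ) * hl ∈ Set.Icc (-τ) 0 := by
              constructor
              · rw [hτml]
                have h5 : (-(ml:ℝ)) ≤ ((j:ℤ) - ml : ℤ) := by exact_mod_cast hc1
                have h6 := mul_le_mul_of_nonneg_right h5 hlpos.le
                linarith
              · have h5 : (((j:ℤ) - ml : ℤ):ℝ) ≤ 0 := by exact_mod_cast hc2
                exact mul_nonpos_of_nonpos_of_nonneg h5 hlpos.le
            have h6 : ‖Z ((j:ℤ) - ml)‖ ≤ S := by rw [hZv]; exact hS _ hmem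
            have h7 : ‖Z ((j:ℤ) - ml)‖^2 ≤ S^2 := pow_le_pow_left₀ (norm_nonneg _) h6 2
            linarith [sq_nonneg T₁]
          · have hcast : (j:ℤ) - ml = ((j - ml : ℕ) : ℤ) := by omega
            have hY' : ‖Y (j-ml)‖^2 ≤ A * G^(j-ml) :=
              ih (j-ml) (by omega) (by omega)
            have hmono : G^(j-ml) ≤ G^j := pow_le_pow_right₀ hG1 (by omega)
            have h7 := hZYn (j-ml)
            rw [hcast]
            have h8 : ‖Z (((j-ml:ℕ)):ℤ)‖^2 ≤ 2*‖Y (j-ml)‖^2 + 2*T₁^2 :=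
              hsq _ _ (norm_nonneg _) h7
            have h9 : A * G^(j-ml) ≤ A * G^j := mul_le_mul_of_nonneg_left hmono hA0
            have h10 : (0:ℝ) ≤ S^2 := sq_nonneg _
            linarith
        have hst := hstep2 j hjN
        have hC2A : C₂ ≤ A * G^j := by
          calc C₂ ≤ A := hAC₂
            _ = A * 1 := (mul_one A).symm
            _ ≤ A * G^j := mul_le_mul_of_nonneg_left hGj1 hA0
        have e0 : ‖Z (j:ℤ)‖^2 + ‖Z ((j:ℤ) - ml)‖^2 ≤ 4*(A*G^j) + 4*T₁^2 + S^2 := by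
          linarith
        have e1 : α₁ * (‖Z (j:ℤ)‖^2 + ‖Z ((j:ℤ) - ml)‖^2)
            ≤ α₁ * (4*(A*G^j) + 4*T₁^2 + S^2) :=
          mul_le_mul_of_nonneg_left e0 (by linarith)
        have e3 : α₁ * (‖Z (j:ℤ)‖^2 + ‖Z ((j:ℤ) - ml)‖^2) + ‖Z (j:ℤ)‖^2 + K^2 + T₁
            ≤ (4*α₁+3) * (A*G^j) := by linarith [e1, hu2, ihj, hC2A]
        have e4 : hl * (α₁ * (‖Z (j:ℤ)‖^2 + ‖Z ((j:ℤ) - ml)‖^2) + ‖Z (j:ℤ)‖^2 + K^2 + T₁)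
            ≤ hl * ((4*α₁+3) * (A*G^j)) := mul_le_mul_of_nonneg_left e3 hlpos.le
        have hpow : A * G^(j+1) = A * G^j + (4*α₁+3)*hl*(A*G^j) := by
          rw [pow_succ, hGdef]; ring
        rw [hpow]
        linarith [hst, e4, ihj]
  -- uniform bound on Z
  have hlT : hl * ((M:ℝ)^l) = T := by
    rw [hhl]; field_simp
  have hGN : ∀ j : ℕ, j ≤ M^l → A * G^j ≤ A * Real.exp ((4*α₁+3)*T) := by
    intro j hj
    apply mul_le_mul_of_nonneg_left _ hA0
    have hle : ((4*α₁+3)*hl) + 1 ≤ Real.exp ((4*α₁+3)*hl) := Real.add_one_le_exp _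
    calc G^j ≤ G^(M^l) := pow_le_pow_right₀ hG1 hj
      _ ≤ (Real.exp ((4*α₁+3)*hl))^(M^l) := pow_le_pow_left₀ hG0 (by rw [hGdef]; linarith) _
      _ = Real.exp (((M^l : ℕ):ℝ) * ((4*α₁+3)*hl)) := (Real.exp_nat_mul _ _).symm
      _ = Real.exp ((4*α₁+3)*T) := by
          congr 1
          push_cast
          rw [← hlT]; ring
  have hZbound : ∀ j : ℕ, j ≤ M^l → ‖Z (j:ℤ)‖ ≤ B₁ := by
    intro j hj
    have h1 : ‖Z (j:ℤ)‖^2 ≤ B2 := by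
      have hk := key j hj
      have hzy := hZYn j
      have hgn := hGN j hj
      rw [hB2def]
      have h0 : ‖Z (j:ℤ)‖^2 ≤ 2*‖Y j‖^2 + 2*T₁^2 := hsq _ _ (norm_nonneg _) hzy
      linarith
    have h2 : ‖Z (j:ℤ)‖ ≤ Real.sqrt B2 := by
      rw [← Real.sqrt_sq (norm_nonneg (Z (j:ℤ)))]
      exact Real.sqrt_le_sqrt h1
    exact le_trans h2 (le_max_left _ _)
  constructor
  · -- first claim: uniform moment bound
    intro j hj0 hjN
    lift j to ℕ using hj0 with n
    have hn : n ≤ M^l := by exact_mod_cast hjN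
    calc ‖Z (n:ℤ)‖^p ≤ B₁^p := Real.rpow_le_rpow (norm_nonneg _) (hZbound n hn) (by linarith)
      _ ≤ C := le_max_left _ _
  · -- second claim: increment bound
    intro n k hn hk1 hkM
    have hQi : ∀ j : ℤ, 0 ≤ j → j < ((M^l : ℕ):ℤ) → ‖Z (j+1) - Z j‖ ≤ hl * c⁻¹ := by
      intro j h0 hN
      have hrec := hZrec j h0 hN
      have hdiff : Z (j+1) - Z j = (θ*hl) • fh (Z (j+1)) (Z (j+1-(ml:ℤ)))
          + ((1-θ)*hl) • fh (Z j) (Z (j-(ml:ℤ))) := by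
        nth_rewrite 1 [hrec]
        abel
      rw [hdiff]
      have h1 : ‖(θ*hl) • fh (Z (j+1)) (Z (j+1-(ml:ℤ)))‖ ≤ θ * hl * c⁻¹ := by
        rw [norm_smul, Real.norm_eq_abs, abs_of_nonneg (mul_nonneg hθ0 hlpos.le)]
        exact mul_le_mul_of_nonneg_left (hfhn _ _) (mul_nonneg hθ0 hlpos.le)
      have h2 : ‖((1-θ)*hl) • fh (Z j) (Z (j-(ml:ℤ)))‖ ≤ (1-θ) * hl * c⁻¹ := by
        rw [norm_smul, Real.norm_eq_abs,
          abs_of_nonneg (mul_nonneg (by linarith) hlpos.le)]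
        exact mul_le_mul_of_nonneg_left (hfhn _ _) (mul_nonneg (by linarith) hlpos.le)
      calc ‖_ + _‖ ≤ ‖(θ*hl) • fh (Z (j+1)) (Z (j+1-(ml:ℤ)))‖
            + ‖((1-θ)*hl) • fh (Z j) (Z (j-(ml:ℤ)))‖ := norm_add_le _ _
        _ ≤ θ * hl * c⁻¹ + (1-θ) * hl * c⁻¹ := add_le_add h1 h2
        _ = hl * c⁻¹ := by ring
    have hMlN : ((M^(l-1) : ℕ):ℤ) * (M:ℤ) = ((M^l : ℕ):ℤ) := by
      push_cast
      rw [← pow_succ]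
      congr 1
      omega
    have htel : ∀ k' : ℕ, k' ≤ M →
        ‖Z ((n:ℤ)*(M:ℤ) + (k':ℤ)) - Z ((n:ℤ)*(M:ℤ))‖ ≤ (k':ℝ) * (hl * c⁻¹) := by
      intro k'
      induction k' with
      | zero => intro _; simp
      | succ i ihi =>
        intro hiM
        have hi := ihi (by omega)
        have hidx0 : (0:ℤ) ≤ (n:ℤ)*(M:ℤ) + (i:ℤ) :=
          add_nonneg (mul_nonneg (Int.natCast_nonneg n) (Int.natCast_nonneg M))
            (Int.natCast_nonneg i)
        have hidxN : (n:ℤ)*(M:ℤ) + (i:ℤ) < ((M^l : ℕ):ℤ) := by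
          have hn1 : ((n:ℤ)+1) ≤ ((M^(l-1) : ℕ):ℤ) := by exact_mod_cast hn
          have hM0' : (0:ℤ) ≤ (M:ℤ) := Int.natCast_nonneg M
          calc (n:ℤ)*(M:ℤ) + (i:ℤ) < (n:ℤ)*(M:ℤ) + (M:ℤ) := by
                have : (i:ℤ) < (M:ℤ) := by exact_mod_cast (by omega : i < M)
                omega
            _ = ((n:ℤ)+1)*(M:ℤ) := by ring
            _ ≤ ((M^(l-1) : ℕ):ℤ) * (M:ℤ) := mul_le_mul_of_nonneg_right hn1 hM0'
            _ = ((M^l : ℕ):ℤ) := hMlN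
        have hQ := hQi ((n:ℤ)*(M:ℤ) + (i:ℤ)) hidx0 hidxN
        have hidxeq : (n:ℤ)*(M:ℤ) + ((i+1 : ℕ):ℤ) = ((n:ℤ)*(M:ℤ) + (i:ℤ)) + 1 := by
          push_cast; ring
        calc ‖Z ((n:ℤ)*(M:ℤ) + ((i+1 : ℕ):ℤ)) - Z ((n:ℤ)*(M:ℤ))‖
            = ‖(Z (((n:ℤ)*(M:ℤ) + (i:ℤ)) + 1) - Z ((n:ℤ)*(M:ℤ) + (i:ℤ)))
              + (Z ((n:ℤ)*(M:ℤ) + (i:ℤ)) - Z ((n:ℤ)*(M:ℤ)))‖ := by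
              rw [hidxeq, sub_add_sub_cancel]
          _ ≤ ‖Z (((n:ℤ)*(M:ℤ) + (i:ℤ)) + 1) - Z ((n:ℤ)*(M:ℤ) + (i:ℤ))‖
              + ‖Z ((n:ℤ)*(M:ℤ) + (i:ℤ)) - Z ((n:ℤ)*(M:ℤ))‖ := norm_add_le _ _
          _ ≤ hl * c⁻¹ + (i:ℝ) * (hl * c⁻¹) := add_le_add hQ hi
          _ = ((i+1 : ℕ):ℝ) * (hl * c⁻¹) := by push_cast; ring
    have hfin := htel k hkM
    have hkb : (k:ℝ) * (hl * c⁻¹) ≤ hl1 ^ ((1:ℝ) - δ) := by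
      have hkM' : (k:ℝ) ≤ M := by exact_mod_cast hkM
      have h2 : (k:ℝ) * (hl * c⁻¹) ≤ (M:ℝ) * (hl * c⁻¹) := by
        apply mul_le_mul_of_nonneg_right hkM'
        exact mul_nonneg hlpos.le (inv_nonneg.2 hc0.le)
      have h3 : (M:ℝ) * (hl * c⁻¹) = hl1 * c⁻¹ := by rw [hl1M]; ring
      rw [h3] at h2
      rw [← hlQ1]
      exact h2
    have hnormb : ‖Z ((n:ℤ)*(M:ℤ) + (k:ℤ)) - Z ((n:ℤ)*(M:ℤ))‖ ≤ hl1 ^ ((1:ℝ) - δ) :=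
      le_trans hfin hkb
    have h5 : ‖Z ((n:ℤ)*(M:ℤ) + (k:ℤ)) - Z ((n:ℤ)*(M:ℤ))‖^p ≤ (hl1 ^ ((1:ℝ) - δ))^p :=
      Real.rpow_le_rpow (norm_nonneg _) hnormb (by linarith)
    have h6 : (hl1 ^ ((1:ℝ) - δ))^p = (M:ℝ) ^ ((1-δ) * p) * hl ^ ((1-δ) * p) := by
      rw [← Real.rpow_mul hl1pos.le, hl1M, Real.mul_rpow hM0.le hlpos.le]
    calc ‖Z ((n:ℤ)*(M:ℤ) + (k:ℤ)) - Z ((n:ℤ)*(M:ℤ))‖^p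
        ≤ (M:ℝ) ^ ((1-δ) * p) * hl ^ ((1-δ) * p) := h5.trans h6.le
      _ ≤ C * ((M:ℝ) ^ ((1-δ) * p) * hl ^ ((1-δ) * p)) := by
          apply le_mul_of_one_le_left _ hC1
          positivity
      _ = C * (M:ℝ) ^ ((1-δ) * p) * hl ^ ((1-δ) * p) := by ring
end
end
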